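/- The function f is strictly increasing on the interval [0, 2): for all real V₁, V₂ with 0 ≤ V₁ < V₂ < 2, f(V₁) < f(V₂). -/

import Mathlib

open Real

/-- First branch of Gupta et al.'s helper function `f`. -/
noncomputable def g1 (V : ℝ) : ℝ := Real.log ((2 + V) / (2 - V)) - 2 * V / (2 + V)

/-- Gupta et al.'s helper function `f`. -/
noncomputable def f (V : ℝ) : ℝ := max (g1 V) (V ^ 2 / 2 + V ^ 4 / 36 + V ^ 6 / 288)

/-! Both branches of `f` are strictly increasing on `[0, 2)`, hence so is their maximum. For the
logarithmic branch the derivative simplifies to `8V / ((2 - V)(2 + V)²)`, positive for `0 < V < 2`. -/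

theorem StrictMonoOn.max {α β : Type*} [Preorder α] [LinearOrder β] {s : Set α} {u v : α → β}
    (hu : StrictMonoOn u s) (hv : StrictMonoOn v s) :
    StrictMonoOn (fun x ↦ max (u x) (v x)) s :=
  fun _ ha _ hb hab ↦ max_lt_max (hu ha hb hab) (hv ha hb hab)

lemma hasDerivAt_g1 {x : ℝ} (hx₁ : -2 < x) (hx₂ : x < 2) :
    HasDerivAt g1 (8 * x / ((2 - x) * (2 + x) ^ 2)) x := by
  have hp : (2 : ℝ) + x ≠ 0 := by linarith
  have hm : (2 : ℝ) - x ≠ 0 := by linarith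
  have hquot : HasDerivAt (fun x : ℝ ↦ (2 + x) / (2 - x)) (4 / (2 - x) ^ 2) x := by
    refine (((hasDerivAt_id' x).const_add 2).div ((hasDerivAt_id' x).const_sub 2) hm).congr_deriv ?_
    ring
  have hfrac : HasDerivAt (fun x : ℝ ↦ 2 * x / (2 + x)) (4 / (2 + x) ^ 2) x := by
    refine (((hasDerivAt_id' x).const_mul 2).div ((hasDerivAt_id' x).const_add 2) hp).congr_deriv ?_
    ring
  refine ((hquot.log (div_ne_zero hp hm)).sub hfrac).congr_deriv ?_
  field_simp
  ring

lemma strictMonoOn_g1 : StrictMonoOn g1 (Set.Ico 0 2) := by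
  refine strictMonoOn_of_hasDerivWithinAt_pos (f' := fun x ↦ 8 * x / ((2 - x) * (2 + x) ^ 2))
    (convex_Ico 0 2)
    (fun x hx ↦ (hasDerivAt_g1 (by linarith [hx.1]) hx.2).continuousAt.continuousWithinAt)
    ?_ ?_ <;> rw [interior_Ico] <;> rintro x ⟨hx₀, hx₂⟩
  · exact (hasDerivAt_g1 (by linarith) hx₂).hasDerivWithinAt
  · have : 0 < 2 - x := by linarith
    positivity

lemma strictMonoOn_polynomial_branch :
    StrictMonoOn (fun V : ℝ ↦ V ^ 2 / 2 + V ^ 4 / 36 + V ^ 6 / 288) (Set.Ici 0) := by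
  intro a ha b _ hab
  have h₂ : a ^ 2 < b ^ 2 := pow_lt_pow_left₀ hab ha two_ne_zero
  have h₄ : a ^ 4 < b ^ 4 := pow_lt_pow_left₀ hab ha four_ne_zero
  have h₆ : a ^ 6 < b ^ 6 := pow_lt_pow_left₀ hab ha (by norm_num)
  dsimp only
  linarith

/-- `f` is strictly increasing on `[0, 2)`. -/
theorem f_strictMonoOn :
    ∀ V₁ V₂ : ℝ, 0 ≤ V₁ → V₁ < V₂ → V₂ < 2 → f V₁ < f V₂ := by
  intro V₁ V₂ h₀ h₁₂ h₂
  have hf : StrictMonoOn f (Set.Ico 0 2) :=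
    strictMonoOn_g1.max (strictMonoOn_polynomial_branch.mono Set.Ico_subset_Ici_self)
  exact hf ⟨h₀, h₁₂.trans h₂⟩ ⟨h₀.trans h₁₂.le, h₂⟩ h₁₂
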